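/- Let a > 0 and assume that the solution f(·;a) satisfies f(r;a) > 0 for all r > 0. Then f(r;a) → 0 and f'(r;a) → 0 as r → ∞. -/

import Mathlib

open Real Set Filter MeasureTheory

/-- `f` is a solution of the profile equation with parameter `a`:
`f` is C¹ on `[0,∞)` with derivative `f'`, the map `r ↦ |f'(r)|^{p-2} f'(r)` is C¹ on `[0,∞)`
with derivative `F'`, the ODE
`(|f'|^{p-2}f')'(r) + ((N-1)/r)(|f'|^{p-2}f')(r) + f(r) - |f'(r)|^{p-1} = 0` holds for `r > 0`,
and `f 0 = a`, `f' 0 = 0`. -/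
def IsProfileSol (N : ℕ) (p a : ℝ) (f f' F' : ℝ → ℝ) : Prop :=
  (∀ r ∈ Ici (0:ℝ), HasDerivWithinAt f (f' r) (Ici 0) r) ∧
  ContinuousOn f' (Ici 0) ∧
  (∀ r ∈ Ici (0:ℝ), HasDerivWithinAt (fun s => |f' s| ^ (p - 2) * f' s) (F' r) (Ici 0) r) ∧
  ContinuousOn F' (Ici 0) ∧
  (∀ r, 0 < r →
    F' r + (((N : ℝ) - 1) / r) * (|f' r| ^ (p - 2) * f' r) + f r - |f' r| ^ (p - 1) = 0) ∧
  f 0 = a ∧ f' 0 = 0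

/-- `g(r;a) = -|f'(r;a)|^{p-2} f'(r;a)`. -/
noncomputable def gFun (p : ℝ) (f' : ℝ → ℝ) (r : ℝ) : ℝ := -(|f' r| ^ (p - 2) * f' r)

/-- `ρ(r) = r^{N-1} e^r`. -/
noncomputable def rho (N : ℕ) (r : ℝ) : ℝ := r ^ (N - 1) * Real.exp r

/-- the derivative of `ρ`. -/
noncomputable def rho' (N : ℕ) (r : ℝ) : ℝ :=
  (((N : ℝ) - 1) * r ^ (N - 2) + r ^ (N - 1)) * Real.exp r

/-- `w(r;a) = ρ(r) g(r;a)`. -/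
noncomputable def wFun (N : ℕ) (p : ℝ) (f' : ℝ → ℝ) (r : ℝ) : ℝ := rho N r * gFun p f' r

/-- the derivative `w'(r;a) = ρ'(r) g(r;a) + ρ(r) g'(r;a)`, where `g' = -F'`. -/
noncomputable def wDeriv (N : ℕ) (p : ℝ) (f' F' : ℝ → ℝ) (r : ℝ) : ℝ :=
  rho' N r * gFun p f' r - rho N r * F' r

/-!
The weighted quantity `w = ρ g`, with `ρ(r) = r^{N-1} e^r` and `g = -|f'|^{p-2} f'`, satisfies
`w' = ρ (f + g - |g|)` by the equation, so `w' ≥ 2w` wherever `w < 0`; as `w(0) = 0` this forces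
`w ≥ 0`, and then a zero of `w` at `r > 0` would be a local minimum with `w'(r) = ρ f > 0`. Hence
`f' < 0`, so `f` decreases to a limit `L ≥ 0`, and the energy `f²/2 + ((p-1)/p)(-f')^p` decreases with
derivative `-(1 + (N-1)/r)(-f')^p`. A convergent function cannot have a derivative tending to a
nonzero limit; applied to the energy this gives `f' → 0`, and applied to `|f'|^{p-2} f'`, whose
derivative tends to `-L` by the equation, it gives `L = 0`.
-/

open Topology

theorem nonneg_of_hasDerivAt_nonneg_of_neg {u u' : ℝ → ℝ} {a b : ℝ} (hab : a ≤ b)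
    (hu : ContinuousOn u (Icc a b)) (hu' : ∀ x ∈ Ioo a b, HasDerivAt u (u' x) x)
    (ha : 0 ≤ u a) (hneg : ∀ x ∈ Ioo a b, u x < 0 → 0 ≤ u' x) : 0 ≤ u b := by
  by_contra! hb
  set A := Icc a b ∩ u ⁻¹' Ici 0
  have hA : IsClosed A := hu.preimage_isClosed_of_isClosed isClosed_Icc isClosed_Ici
  have hAbdd : BddAbove A := ⟨b, fun x hx => hx.1.2⟩
  have hsA : sSup A ∈ A := hA.csSup_mem ⟨a, left_mem_Icc.2 hab, ha⟩ hAbdd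
  set s := sSup A
  have hs : a ≤ s ∧ s ≤ b ∧ 0 ≤ u s := ⟨hsA.1.1, hsA.1.2, hsA.2⟩
  have hsb : s < b := hs.2.1.lt_of_ne fun h => hb.not_ge (h ▸ hs.2.2)
  have hlt : ∀ x ∈ Ioc s b, u x < 0 := fun x hx => by
    by_contra! h
    exact hx.1.not_ge (le_csSup hAbdd ⟨⟨hs.1.trans hx.1.le, hx.2⟩, h⟩)
  have hmono : MonotoneOn u (Icc s b) := by
    refine monotoneOn_of_hasDerivWithinAt_nonneg (f' := u') (convex_Icc s b)
      (hu.mono (Icc_subset_Icc hs.1 le_rfl)) (fun x hx => ?_) (fun x hx => ?_)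
    all_goals rw [interior_Icc] at hx
    · exact (hu' x ⟨hs.1.trans_lt hx.1, hx.2⟩).hasDerivWithinAt
    · exact hneg x ⟨hs.1.trans_lt hx.1, hx.2⟩ (hlt x ⟨hx.1, hx.2.le⟩)
  linarith [hmono (left_mem_Icc.2 hsb.le) (right_mem_Icc.2 hsb.le) hsb.le]

theorem nonneg_of_mul_le_hasDerivAt_of_neg {u u' : ℝ → ℝ} {a b c : ℝ} (hab : a ≤ b)
    (hu : ContinuousOn u (Icc a b)) (hu' : ∀ x ∈ Ioo a b, HasDerivAt u (u' x) x)
    (ha : 0 ≤ u a) (hneg : ∀ x ∈ Ioo a b, u x < 0 → c * u x ≤ u' x) : 0 ≤ u b := by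
  have hexp : ∀ x, HasDerivAt (fun x => exp (-c * x)) (exp (-c * x) * -c) x := fun x => by
    simpa using ((hasDerivAt_id x).const_mul (-c)).exp
  have hv := nonneg_of_hasDerivAt_nonneg_of_neg (u := fun x => exp (-c * x) * u x)
    (u' := fun x => exp (-c * x) * (u' x - c * u x)) hab
    ((continuous_exp.comp (continuous_const.mul continuous_id)).continuousOn.mul hu)
    (fun x hx => ((hexp x).mul (hu' x hx)).congr_deriv (by ring)) (by positivity)
    (fun x hx hx' => mul_nonneg (exp_pos _).le
      (sub_nonneg.2 (hneg x hx (neg_of_mul_neg_right hx' (exp_pos _).le))))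
  exact nonneg_of_mul_nonneg_right hv (exp_pos _)

theorem tendsto_atTop_of_le_hasDerivAt {h h' : ℝ → ℝ} {c : ℝ} (hc : 0 < c)
    (hd : ∀ᶠ x in atTop, HasDerivAt h (h' x) x) (hle : ∀ᶠ x in atTop, c ≤ h' x) :
    Tendsto h atTop atTop := by
  obtain ⟨R, hR⟩ := eventually_atTop.1 (hd.and hle)
  have hmono : MonotoneOn (fun x => h x - c * x) (Ici R) := by
    refine monotoneOn_of_hasDerivWithinAt_nonneg (f' := fun x => h' x - c) (convex_Ici R)
      (fun x hx => ((hR x hx).1.continuousAt.sub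
        (continuousAt_const.mul continuousAt_id)).continuousWithinAt)
      (fun x hx => ?_) (fun x hx => ?_)
    all_goals rw [interior_Ici] at hx
    · exact ((hR x hx.le).1.sub ((hasDerivAt_id' x).const_mul c)).hasDerivWithinAt.congr_deriv
        (by ring)
    · exact sub_nonneg.2 (hR x hx.le).2
  refine tendsto_atTop_mono' atTop ?_ (tendsto_atTop_add_const_left _ (h R - c * R)
    (tendsto_id.const_mul_atTop hc))
  filter_upwards [eventually_ge_atTop R] with x hx
  rw [id]
  linarith [hmono self_mem_Ici hx hx]

theorem eq_zero_of_tendsto_of_tendsto_hasDerivAt {h h' : ℝ → ℝ} {c ℓ : ℝ}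
    (hd : ∀ᶠ x in atTop, HasDerivAt h (h' x) x) (hh : Tendsto h atTop (𝓝 c))
    (hh' : Tendsto h' atTop (𝓝 ℓ)) : ℓ = 0 := by
  have key : ∀ {h h' : ℝ → ℝ} {c ℓ : ℝ}, (∀ᶠ x in atTop, HasDerivAt h (h' x) x) →
      Tendsto h atTop (𝓝 c) → Tendsto h' atTop (𝓝 ℓ) → ¬ 0 < ℓ :=
    fun hd hh hh' hℓ => not_tendsto_nhds_of_tendsto_atTop (tendsto_atTop_of_le_hasDerivAt
      (half_pos hℓ) hd (hh'.eventually (eventually_ge_nhds (half_lt_self hℓ)))) _ hh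
  rcases lt_trichotomy ℓ 0 with hℓ | hℓ | hℓ
  · exact absurd (neg_pos.2 hℓ) (key (hd.mono fun x hx => hx.neg) hh.neg hh'.neg)
  · exact hℓ
  · exact absurd hℓ (key hd hh hh')

theorem exists_tendsto_of_hasDerivAt_nonpos {h h' : ℝ → ℝ} {R b : ℝ}
    (hd : ∀ x, R < x → HasDerivAt h (h' x) x) (hd' : ∀ x, R < x → h' x ≤ 0)
    (hb : ∀ x, R < x → b ≤ h x) : ∃ L, Tendsto h atTop (𝓝 L) := by
  have hanti : AntitoneOn h (Ioi R) := by
    refine antitoneOn_of_hasDerivWithinAt_nonpos (f' := h') (convex_Ioi R)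
      (fun x hx => (hd x hx).continuousAt.continuousWithinAt) (fun x hx => ?_) (fun x hx => ?_)
    all_goals rw [interior_Ioi] at hx
    · exact (hd x hx).hasDerivWithinAt
    · exact hd' x hx
  have hR : ∀ x, R < max x (R + 1) := fun x => (lt_add_one R).trans_le (le_max_right _ _)
  have hk : Antitone fun x => h (max x (R + 1)) := fun x y hxy =>
    hanti (hR x) (hR y) (max_le_max hxy le_rfl)
  refine ⟨_, (tendsto_atTop_ciInf hk ⟨b, ?_⟩).congr' ?_⟩
  · rintro _ ⟨x, rfl⟩
    exact hb _ (hR x)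
  · filter_upwards [eventually_ge_atTop (R + 1)] with x hx
    simp [max_eq_left hx]

theorem abs_abs_rpow_sub_two_mul_self {p : ℝ} (hp : p ≠ 1) (x : ℝ) :
    |(|x| ^ (p - 2) * x)| = |x| ^ (p - 1) := by
  rcases eq_or_ne x 0 with rfl | hx
  · simp [zero_rpow (sub_ne_zero.2 hp)]
  · rw [abs_mul, abs_of_nonneg (rpow_nonneg (abs_nonneg x) _), show p - 1 = (p - 2) + 1 by ring,
      rpow_add_one (abs_ne_zero.2 hx)]

theorem gFun_eq_neg_rpow {p : ℝ} {f' : ℝ → ℝ} {r : ℝ} (hr : f' r < 0) :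
    gFun p f' r = (-f' r) ^ (p - 1) := by
  rw [gFun, abs_of_neg hr, show p - 1 = (p - 2) + 1 by ring,
    rpow_add_one (neg_pos.2 hr).ne']
  ring

theorem hasDerivAt_rho {N : ℕ} (hN : 1 ≤ N) (r : ℝ) : HasDerivAt (rho N) (rho' N r) r := by
  have hcast : ((N - 1 : ℕ) : ℝ) = (N : ℝ) - 1 := by rw [Nat.cast_sub hN, Nat.cast_one]
  refine ((hasDerivAt_pow (N - 1) r).mul (hasDerivAt_exp r)).congr_deriv ?_
  rw [rho', show N - 1 - 1 = N - 2 by omega, hcast]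
  ring

theorem rho_pos (N : ℕ) {r : ℝ} (hr : 0 < r) : 0 < rho N r :=
  mul_pos (pow_pos hr _) (exp_pos r)

theorem rho_zero {N : ℕ} (hN : 2 ≤ N) : rho N 0 = 0 := by
  simp [rho, zero_pow (show N - 1 ≠ 0 by omega)]

theorem rho'_eq {N : ℕ} (hN : 2 ≤ N) {r : ℝ} (hr : 0 < r) :
    rho' N r = (1 + ((N : ℝ) - 1) / r) * rho N r := by
  have h : r ^ (N - 1) = r ^ (N - 2) * r := by rw [← pow_succ]; congr 1; omega
  rw [rho', rho, h]
  field_simp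
  ring

/-- The energy `f²/2 + ((p-1)/p) (-f')^p`, written through `g = (-f')^{p-1}` because only
`|f'|^{p-2} f'`, not `f'`, is known to be differentiable. -/
noncomputable def profileEnergy (p : ℝ) (f f' : ℝ → ℝ) (r : ℝ) : ℝ :=
  f r ^ 2 / 2 + (p - 1) / p * gFun p f' r ^ (p / (p - 1))

namespace IsProfileSol

variable {N : ℕ} {p a : ℝ} {f f' F' : ℝ → ℝ}

theorem ode (hf : IsProfileSol N p a f f' F') {r : ℝ} (hr : 0 < r) :
    F' r + ((N : ℝ) - 1) / r * (|f' r| ^ (p - 2) * f' r) + f r - |f' r| ^ (p - 1) = 0 :=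
  hf.2.2.2.2.1 r hr

theorem hasDerivAt (hf : IsProfileSol N p a f f' F') {r : ℝ} (hr : 0 < r) :
    HasDerivAt f (f' r) r :=
  (hf.1 r hr.le).hasDerivAt (Ici_mem_nhds hr)

theorem hasDerivAt_flux (hf : IsProfileSol N p a f f' F') {r : ℝ} (hr : 0 < r) :
    HasDerivAt (fun s => |f' s| ^ (p - 2) * f' s) (F' r) r :=
  (hf.2.2.1 r hr.le).hasDerivAt (Ici_mem_nhds hr)

theorem hasDerivWithinAt_wFun (hN : 1 ≤ N) (hf : IsProfileSol N p a f f' F') {r : ℝ}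
    (hr : 0 ≤ r) : HasDerivWithinAt (wFun N p f') (wDeriv N p f' F' r) (Ici 0) r :=
  ((hasDerivAt_rho hN r).hasDerivWithinAt.mul (hf.2.2.1 r hr).neg).congr_deriv (by
    simp only [wDeriv, gFun, Pi.neg_apply]; ring)

theorem wDeriv_eq (hN : 2 ≤ N) (hp : p ≠ 1) (hf : IsProfileSol N p a f f' F') {r : ℝ}
    (hr : 0 < r) : wDeriv N p f' F' r = rho N r * (f r + gFun p f' r - |gFun p f' r|) := by
  have hF' : F' r = |f' r| ^ (p - 1) - f r - ((N : ℝ) - 1) / r * (|f' r| ^ (p - 2) * f' r) := by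
    linarith [hf.ode hr]
  rw [wDeriv, rho'_eq hN hr, gFun, abs_neg, abs_abs_rpow_sub_two_mul_self hp, hF']
  ring

theorem wFun_nonneg (hN : 2 ≤ N) (hp : p ≠ 1) (hf : IsProfileSol N p a f f' F')
    (hpos : ∀ r, 0 < r → 0 < f r) {r : ℝ} (hr : 0 ≤ r) : 0 ≤ wFun N p f' r := by
  refine nonneg_of_mul_le_hasDerivAt_of_neg (c := 2) hr
    (fun x hx => (hf.hasDerivWithinAt_wFun (by omega) hx.1).continuousWithinAt.mono
      Icc_subset_Ici_self)
    (fun x hx => (hf.hasDerivWithinAt_wFun (by omega) hx.1.le).hasDerivAt (Ici_mem_nhds hx.1))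
    (by simp [wFun, rho_zero hN]) fun x hx hw => ?_
  have hρ := rho_pos N hx.1
  have hg : gFun p f' x < 0 := neg_of_mul_neg_right hw hρ.le
  rw [hf.wDeriv_eq hN hp hx.1, abs_of_neg hg, wFun]
  nlinarith [hpos x hx.1]

theorem gFun_pos (hN : 2 ≤ N) (hp : p ≠ 1) (hf : IsProfileSol N p a f f' F')
    (hpos : ∀ r, 0 < r → 0 < f r) {r : ℝ} (hr : 0 < r) : 0 < gFun p f' r := by
  by_contra! hg
  have hρ := rho_pos N hr
  have hw : wFun N p f' r = 0 :=
    le_antisymm (mul_nonpos_of_nonneg_of_nonpos hρ.le hg) (hf.wFun_nonneg hN hp hpos hr.le)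
  have hmin : IsLocalMin (wFun N p f') r := by
    filter_upwards [Ioi_mem_nhds hr] with x hx
    exact hw ▸ hf.wFun_nonneg hN hp hpos (le_of_lt hx)
  have hw' := hmin.hasDerivAt_eq_zero
    ((hf.hasDerivWithinAt_wFun (by omega) hr.le).hasDerivAt (Ici_mem_nhds hr))
  rw [hf.wDeriv_eq hN hp hr, abs_of_nonpos hg] at hw'
  rw [wFun] at hw
  nlinarith [mul_pos hρ (hpos r hr)]

theorem deriv_neg (hN : 2 ≤ N) (hp : p ≠ 1) (hf : IsProfileSol N p a f f' F')
    (hpos : ∀ r, 0 < r → 0 < f r) {r : ℝ} (hr : 0 < r) : f' r < 0 := by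
  by_contra! h
  have := hf.gFun_pos hN hp hpos hr
  rw [gFun, neg_pos] at this
  exact this.not_ge (mul_nonneg (rpow_nonneg (abs_nonneg _) _) h)

theorem hasDerivAt_profileEnergy (hp : 1 < p) (hf : IsProfileSol N p a f f' F') {x : ℝ}
    (hx : 0 < x) (hfx : f' x < 0) :
    HasDerivAt (profileEnergy p f f') (-(1 + ((N : ℝ) - 1) / x) * (-f' x) ^ p) x := by
  have hφ : 0 < -f' x := neg_pos.2 hfx
  have hg : gFun p f' x = (-f' x) ^ (p - 1) := gFun_eq_neg_rpow hfx
  have hgd : HasDerivAt (gFun p f') (-F' x) x := (hf.hasDerivAt_flux hx).neg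
  have hE := ((hf.hasDerivAt hx).pow 2).div_const 2 |>.add
    (((hasDerivAt_rpow_const (p := p / (p - 1)) (Or.inl (hg ▸ (rpow_pos_of_pos hφ _).ne'))).comp
      x hgd).const_mul ((p - 1) / p))
  have hgq : gFun p f' x ^ (p / (p - 1) - 1) = -f' x := by
    rw [hg, ← rpow_mul hφ.le, show (p - 1) * (p / (p - 1) - 1) = 1 by
      field_simp [(sub_pos.2 hp).ne']; ring, rpow_one]
  have hF' : F' x = (1 + ((N : ℝ) - 1) / x) * (-f' x) ^ (p - 1) - f x := by
    have hG : |f' x| ^ (p - 2) * f' x = -(-f' x) ^ (p - 1) := by rw [← hg, gFun, neg_neg]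
    have hode := hf.ode hx
    rw [hG, abs_of_neg hfx] at hode
    linear_combination hode
  refine hE.congr_deriv ?_
  rw [hgq, hF', show (-f' x) ^ p = (-f' x) ^ (p - 1) * -f' x by
    rw [← rpow_add_one hφ.ne']; norm_num]
  field_simp [(sub_pos.2 hp).ne']
  ring

theorem exists_tendsto (hN : 2 ≤ N) (hp : p ≠ 1) (hf : IsProfileSol N p a f f' F')
    (hpos : ∀ r, 0 < r → 0 < f r) : ∃ L, Tendsto f atTop (𝓝 L) :=
  exists_tendsto_of_hasDerivAt_nonpos (R := 0) (b := 0)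
    (fun _ hx => hf.hasDerivAt hx)
    (fun _ hx => (hf.deriv_neg hN hp hpos hx).le) (fun x hx => (hpos x hx).le)

theorem tendsto_deriv_zero (hN : 2 ≤ N) (hp : 1 < p) (hf : IsProfileSol N p a f f' F')
    (hpos : ∀ r, 0 < r → 0 < f r) : Tendsto f' atTop (𝓝 0) := by
  have hφ : ∀ x, 0 < x → 0 < -f' x := fun x hx => neg_pos.2 (hf.deriv_neg hN hp.ne' hpos hx)
  have hcoef : ∀ x, 0 < x → 0 ≤ 1 + ((N : ℝ) - 1) / x := fun x hx =>
    add_nonneg zero_le_one (div_nonneg (by linarith [show (2 : ℝ) ≤ N by exact_mod_cast hN]) hx.le)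
  obtain ⟨L, hL⟩ := hf.exists_tendsto hN hp.ne' hpos
  obtain ⟨E, hE⟩ := exists_tendsto_of_hasDerivAt_nonpos (b := 0)
    (fun x hx => hf.hasDerivAt_profileEnergy hp hx (neg_pos.1 (hφ x hx)))
    (fun x hx => mul_nonpos_of_nonpos_of_nonneg (neg_nonpos.2 (hcoef x hx))
      (rpow_nonneg (hφ x hx).le _))
    (fun x hx => add_nonneg (by positivity) (mul_nonneg (div_nonneg (sub_pos.2 hp).le
      (by linarith)) (rpow_nonneg (hf.gFun_pos hN hp.ne' hpos hx).le _)))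
  have hφp : Tendsto (fun r => (-f' r) ^ p) atTop (𝓝 ((E - L ^ 2 / 2) * (p / (p - 1)))) := by
    refine ((hE.sub ((hL.pow 2).div_const 2)).mul_const _).congr' ?_
    filter_upwards [eventually_gt_atTop 0] with r hr
    rw [profileEnergy, gFun_eq_neg_rpow (neg_pos.1 (hφ r hr)), ← rpow_mul (hφ r hr).le,
      show (p - 1) * (p / (p - 1)) = p by field_simp [(sub_pos.2 hp).ne']]
    field_simp [(sub_pos.2 hp).ne']
    ring
  have hE' : Tendsto (fun x => -(1 + ((N : ℝ) - 1) / x) * (-f' x) ^ p) atTop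
      (𝓝 (-(1 + 0) * ((E - L ^ 2 / 2) * (p / (p - 1))))) :=
    (tendsto_const_nhds.add (tendsto_const_nhds.div_atTop tendsto_id)).neg.mul hφp
  have hM := eq_zero_of_tendsto_of_tendsto_hasDerivAt ((eventually_gt_atTop 0).mono fun x hx =>
    hf.hasDerivAt_profileEnergy hp hx (neg_pos.1 (hφ x hx))) hE hE'
  rw [add_zero, neg_one_mul, neg_eq_zero] at hM
  rw [hM] at hφp
  have h := hφp.rpow_const (p := p⁻¹) (Or.inr (inv_nonneg.2 (by linarith)))
  rw [zero_rpow (inv_ne_zero (by linarith))] at h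
  simpa using (h.congr' ((eventually_gt_atTop 0).mono fun x hx =>
    rpow_rpow_inv (hφ x hx).le (by linarith))).neg

theorem eq_zero_of_tendsto (hp : 1 < p) (hf : IsProfileSol N p a f f' F') {L : ℝ}
    (hL : Tendsto f atTop (𝓝 L)) (hf' : Tendsto f' atTop (𝓝 0)) : L = 0 := by
  have habs : Tendsto (fun r => |f' r| ^ (p - 1)) atTop (𝓝 0) := by
    simpa [zero_rpow (sub_pos.2 hp).ne'] using hf'.abs.rpow_const (Or.inr (sub_pos.2 hp).le)
  have hG : Tendsto (fun r => |f' r| ^ (p - 2) * f' r) atTop (𝓝 0) := by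
    rw [tendsto_zero_iff_abs_tendsto_zero]
    simpa only [Function.comp_def, abs_abs_rpow_sub_two_mul_self hp.ne'] using habs
  have hF' : Tendsto F' atTop (𝓝 (-L)) := by
    have h : Tendsto (fun x => |f' x| ^ (p - 1) - f x - ((N : ℝ) - 1) / x *
        (|f' x| ^ (p - 2) * f' x)) atTop (𝓝 (0 - L - 0 * 0)) :=
      (habs.sub hL).sub ((tendsto_const_nhds.div_atTop tendsto_id).mul hG)
    rw [zero_sub, mul_zero, sub_zero] at h
    refine h.congr' ((eventually_gt_atTop 0).mono fun x hx => ?_)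
    linarith [hf.ode hx]
  exact neg_eq_zero.1 (eq_zero_of_tendsto_of_tendsto_hasDerivAt ((eventually_gt_atTop 0).mono
    fun _ hx => hf.hasDerivAt_flux hx) hG hF')

end IsProfileSol

theorem stmt5_general (N : ℕ) (hN : 2 ≤ N) (p : ℝ)
    (hp1 : 2 * (N : ℝ) / ((N : ℝ) + 1) < p)
    (a : ℝ)
    (f f' F' : ℝ → ℝ) (hf : IsProfileSol N p a f f' F')
    (hpos : ∀ r, 0 < r → 0 < f r) :
    Filter.Tendsto f Filter.atTop (nhds 0) ∧ Filter.Tendsto f' Filter.atTop (nhds 0) := by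
  have hp : 1 < p := by
    refine lt_of_le_of_lt ?_ hp1
    rw [le_div_iff₀ (by positivity)]
    linarith [show (2 : ℝ) ≤ N by exact_mod_cast hN]
  obtain ⟨L, hL⟩ := hf.exists_tendsto hN hp.ne' hpos
  have hf' := hf.tendsto_deriv_zero hN hp hpos
  obtain rfl := hf.eq_zero_of_tendsto hp hL hf'
  exact ⟨hL, hf'⟩

/-- if the profile is positive on `(0,∞)`, then `f(r;a) → 0` and
`f'(r;a) → 0` as `r → ∞`. -/
theorem stmt5 (N : ℕ) (hN : 2 ≤ N) (p : ℝ)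
    (hp1 : 2 * (N : ℝ) / ((N : ℝ) + 1) < p) (hp2 : p < 2)
    (a : ℝ) (ha : 0 < a)
    (f f' F' : ℝ → ℝ) (hf : IsProfileSol N p a f f' F')
    (hpos : ∀ r, 0 < r → 0 < f r) :
    Filter.Tendsto f Filter.atTop (nhds 0) ∧ Filter.Tendsto f' Filter.atTop (nhds 0) :=
  stmt5_general N hN p hp1 a f f' F' hf hpos
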